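/- Let Λ be a self-adjoint linear relation on ℂⁿ (with the standard Hermitian inner product, linear in the second argument). Then there exists a subset θ ⊆ {1,…,n} such that, denoting by P_θ the orthogonal projection onto span{e_j : j ∈ θ} (e_j the standard basis) and P_θᶜ = 1 − P_θ, the transformed linear relation Λ^θ := {(P_θᶜ x₁ + P_θ x₂, P_θᶜ x₂ − P_θ x₁) : (x₁,x₂) ∈ Λ} is the graph of a linear operator on ℂⁿ, i.e. the projection of Λ^θ onto its first component is injective and has full range. -/

import Mathlib

open ContinuousLinearMap

variable {G : Type*} [NormedAddCommGroup G] [InnerProductSpace ℂ G] [CompleteSpace G]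

/-- The operator `M^{A,B}` on `G × G`, `(x₁,x₂) ↦ (A x₁ - B x₂, B x₁ + A x₂)`. -/
noncomputable def MAB (A B : G →L[ℂ] G) : (G × G) →L[ℂ] (G × G) :=
  ((A.comp (fst ℂ G G)) - (B.comp (snd ℂ G G))).prod
    ((B.comp (fst ℂ G G)) + (A.comp (snd ℂ G G)))

/-- The linear relation `Λ^{A,B} = {(x₁,x₂) : A x₁ = B x₂}`. -/
def LambdaAB (A B : G →L[ℂ] G) : Submodule ℂ (G × G) where
  carrier := {p | A p.1 = B p.2}
  add_mem' := by
    intro a b ha hb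
    simp only [Set.mem_setOf_eq] at *
    simp [ha, hb]
  zero_mem' := by simp
  smul_mem' := by
    intro c p hp
    simp only [Set.mem_setOf_eq] at *
    simp [hp]

/-- The adjoint of a linear relation. -/
def relAdjoint (Λ : Submodule ℂ (G × G)) : Submodule ℂ (G × G) where
  carrier := {p | ∀ q ∈ Λ, (inner ℂ p.1 q.2 : ℂ) = inner ℂ p.2 q.1}
  add_mem' := by
    intro a b ha hb q hq
    simp [inner_add_left, ha q hq, hb q hq]
  zero_mem' := by
    intro q hq; simp
  smul_mem' := by
    intro c p hp q hq
    simp [inner_smul_left, hp q hq]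

/-- A linear relation is self-adjoint if it equals its adjoint. -/
def IsSelfAdjointRel (Λ : Submodule ℂ (G × G)) : Prop := relAdjoint Λ = Λ

/-- A bounded operator is boundedly invertible if it has a bounded two-sided inverse. -/
def IsBoundedlyInvertible {E F : Type*} [NormedAddCommGroup E] [NormedSpace ℂ E]
    [NormedAddCommGroup F] [NormedSpace ℂ F] (T : E →L[ℂ] F) : Prop :=
  ∃ T' : F →L[ℂ] E, (∀ x, T' (T x) = x) ∧ (∀ y, T (T' y) = y)

/-- The pair `(A,B)` is normalized if `A B* = B A*` and `M^{A,B}` is boundedly invertible. -/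
noncomputable def IsNormalized (A B : G →L[ℂ] G) : Prop :=
  A ∘L adjoint B = B ∘L adjoint A ∧ IsBoundedlyInvertible (MAB A B)

/-- The transformed linear relation `Λ^θ = {(P_θᶜ x₁ + P_θ x₂, P_θᶜ x₂ − P_θ x₁) : (x₁,x₂) ∈ Λ}`,
written componentwise (`P_θ` is the orthogonal projection onto `span{e_j : j ∈ θ}` and
`P_θᶜ = 1 − P_θ`). -/
def coordTransform {n : ℕ} (θ : Finset (Fin n))
    (Λ : Submodule ℂ (EuclideanSpace ℂ (Fin n) × EuclideanSpace ℂ (Fin n))) :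
    Set (EuclideanSpace ℂ (Fin n) × EuclideanSpace ℂ (Fin n)) :=
  {r | ∃ p ∈ Λ, (∀ j, r.1 j = if j ∈ θ then p.2 j else p.1 j) ∧
                (∀ j, r.2 j = if j ∈ θ then -(p.1 j) else p.2 j)}

/-! Let `N = {v | (0, v) ∈ Λ}` and choose `θ` so that restricting the vectors of `N` to the
coordinates in `θ` is a bijection onto `ℂ^θ` (coordinate functionals forming a basis of the dual
of `N`). Then `Λ` meets `L_θ = {(x₁, x₂) | x₁ vanishes off θ, x₂ vanishes on θ}` only in `0`:
for `(x₁, x₂) ∈ Λ ∩ L_θ` take `v ∈ N` agreeing with `x₁` on `θ`; symmetry of `Λ` gives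
`⟪x₁, x₁⟫ = ⟪x₁, v⟫ = ⟪x₂, 0⟫ = 0`, and then `x₂ ∈ N` vanishes on `θ`. This transversality is
injectivity of the first projection of `Λ^θ`. For surjectivity, a vector `x` orthogonal to the
range of that projection gives `(P_θ x, -P_θᶜ x) ∈ Λ* ∩ L_θ = Λ ∩ L_θ = 0`, so `x = 0`. -/

open Module

theorem Module.Dual.exists_finite_bijective_pi {K V ι : Type*} [Field K]
    [AddCommGroup V] [Module K V] [FiniteDimensional K V]
    (f : ι → Dual K V) (hf : ∀ v, (∀ i, f i v = 0) → v = 0) :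
    ∃ s : Set ι, s.Finite ∧ Function.Bijective (LinearMap.pi fun i : s => f i) := by
  obtain ⟨s, -, -, hspan, hli⟩ :=
    exists_linearIndepOn_extension (linearIndepOn_empty K f) (Set.empty_subset Set.univ)
  have : Fintype s := @Fintype.ofFinite s hli.finite
  have hinj : Function.Injective (LinearMap.pi fun i : s => f i) := by
    rw [← LinearMap.ker_eq_bot, eq_bot_iff]
    intro v hv
    refine hf v fun i => ?_
    have hs : f '' s ⊆ LinearMap.ker (Dual.eval K V v) := by
      rintro _ ⟨j, hj, rfl⟩
      exact congr_fun (LinearMap.mem_ker.1 hv) ⟨j, hj⟩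
    exact Submodule.span_le.2 hs (hspan ⟨i, trivial, rfl⟩)
  have hrank : finrank K V = finrank K (s → K) :=
    le_antisymm (LinearMap.finrank_le_finrank_of_injective hinj)
      (by simpa [Subspace.dual_finrank_eq] using hli.fintype_card_le_finrank)
  exact ⟨s, s.toFinite, hinj,
    (LinearMap.injective_iff_surjective_of_finrank_eq_finrank hrank).1 hinj⟩

theorem Submodule.exists_finset_coord_bijective {𝕜 ι : Type*} [RCLike 𝕜] [Fintype ι]
    (N : Submodule 𝕜 (EuclideanSpace 𝕜 ι)) :
    ∃ θ : Finset ι, (∀ v ∈ N, (∀ j ∈ θ, v j = 0) → v = 0) ∧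
      ∀ x : EuclideanSpace 𝕜 ι, ∃ v ∈ N, ∀ j ∈ θ, v j = x j := by
  obtain ⟨s, hs, hinj, hsurj⟩ := Module.Dual.exists_finite_bijective_pi
    (fun j => EuclideanSpace.projₗ j ∘ₗ N.subtype)
    (fun v hv => Subtype.ext (PiLp.ext fun j => hv j))
  refine ⟨hs.toFinset, fun v hv hv0 => ?_, fun x => ?_⟩
  · simpa using @hinj ⟨v, hv⟩ 0 (funext fun j => by simpa using hv0 j (by simp))
  · obtain ⟨v, hv⟩ := hsurj fun j => x j
    exact ⟨v, v.2, fun j hj => congr_fun hv ⟨j, by simpa using hj⟩⟩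

section CoordMix

variable {ι : Type*} [DecidableEq ι]

/-- `coordMix θ (x₁, x₂) = P_θᶜ x₁ + P_θ x₂` is the first component of `Λ^θ`; its second
component is `coordMix θ (x₂, -x₁)`. -/
def coordMix (θ : Finset ι) :
    EuclideanSpace ℂ ι × EuclideanSpace ℂ ι →ₗ[ℂ] EuclideanSpace ℂ ι where
  toFun p := WithLp.toLp 2 fun j => if j ∈ θ then p.2 j else p.1 j
  map_add' p q := by ext j; by_cases hj : j ∈ θ <;> simp [hj]
  map_smul' c p := by ext j; by_cases hj : j ∈ θ <;> simp [hj]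

@[simp]
theorem coordMix_apply (θ : Finset ι) (p : EuclideanSpace ℂ ι × EuclideanSpace ℂ ι) (j : ι) :
    coordMix θ p j = if j ∈ θ then p.2 j else p.1 j := rfl

theorem coordMix_self (θ : Finset ι) (x : EuclideanSpace ℂ ι) : coordMix θ (x, x) = x := by
  ext j; simp

variable [Fintype ι]

theorem inner_coordMix (θ : Finset ι) (x : EuclideanSpace ℂ ι)
    (q : EuclideanSpace ℂ ι × EuclideanSpace ℂ ι) :
    inner ℂ x (coordMix θ q) =
      inner ℂ (coordMix θ (0, x)) q.2 + inner ℂ (coordMix θ (x, 0)) q.1 := by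
  simp only [PiLp.inner_apply, ← Finset.sum_add_distrib, coordMix_apply]
  refine Finset.sum_congr rfl fun j _ => ?_
  split_ifs <;> simp

theorem disjoint_ker_coordMix {Λ : Submodule ℂ (EuclideanSpace ℂ ι × EuclideanSpace ℂ ι)}
    (hΛ : Λ ≤ relAdjoint Λ) {θ : Finset ι}
    (hsep : ∀ v ∈ Λ.comap (LinearMap.inr ℂ _ _), (∀ j ∈ θ, v j = 0) → v = 0)
    (hsurj : ∀ x : EuclideanSpace ℂ ι, ∃ v ∈ Λ.comap (LinearMap.inr ℂ _ _), ∀ j ∈ θ, v j = x j) :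
    Disjoint Λ (LinearMap.ker (coordMix θ)) := by
  rw [Submodule.disjoint_def]
  rintro ⟨p₁, p₂⟩ hp hker
  have hmix (j : ι) : (if j ∈ θ then p₂ j else p₁ j) = 0 := by
    simpa using congr_fun (congrArg WithLp.ofLp (LinearMap.mem_ker.1 hker)) j
  obtain ⟨v, hv, hvp⟩ := hsurj p₁
  have hp₁ : p₁ = 0 := by
    have hsymm : inner ℂ p₁ v = inner ℂ p₂ (0 : EuclideanSpace ℂ ι) := hΛ hp (0, v) hv
    rw [inner_zero_right] at hsymm
    have hself : inner ℂ p₁ p₁ = inner ℂ p₁ v := by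
      refine Finset.sum_congr rfl fun j _ => ?_
      by_cases hj : j ∈ θ
      · rw [hvp j hj]
      · rw [show p₁ j = 0 by simpa [hj] using hmix j]; simp
    exact inner_self_eq_zero.1 (hself.trans hsymm)
  have hp₂ : p₂ = 0 := hsep p₂ (by simpa [hp₁] using hp) fun j hj => by simpa [hj] using hmix j
  simp [hp₁, hp₂]

theorem map_coordMix_eq_top {Λ : Submodule ℂ (EuclideanSpace ℂ ι × EuclideanSpace ℂ ι)}
    (hΛ : relAdjoint Λ ≤ Λ) {θ : Finset ι} (hdisj : Disjoint Λ (LinearMap.ker (coordMix θ))) :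
    Λ.map (coordMix θ) = ⊤ := by
  rw [← Submodule.orthogonal_eq_bot_iff, eq_bot_iff]
  intro x hx
  set u := (coordMix θ (0, x), -coordMix θ (x, 0))
  have hu : u ∈ relAdjoint Λ := fun q hq => by
    have := (Submodule.mem_orthogonal' _ x).1 hx _ ⟨q, hq, rfl⟩
    rw [inner_coordMix] at this
    simp only [u, inner_neg_left]
    linear_combination this
  have hu_ker : u ∈ LinearMap.ker (coordMix θ) := by
    ext j; by_cases hj : j ∈ θ <;> simp [u, hj]
  obtain ⟨hθ, hθc⟩ : coordMix θ (0, x) = 0 ∧ coordMix θ (x, 0) = 0 := by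
    simpa [u] using Submodule.disjoint_def.1 hdisj u (hΛ hu) hu_ker
  rw [Submodule.mem_bot]
  calc x = coordMix θ ((0, x) + (x, 0)) := by
        rw [Prod.mk_add_mk, zero_add, add_zero, coordMix_self]
    _ = 0 := by rw [map_add, hθ, hθc, add_zero]

end CoordMix

theorem mem_coordTransform_iff {n : ℕ} {θ : Finset (Fin n)}
    {Λ : Submodule ℂ (EuclideanSpace ℂ (Fin n) × EuclideanSpace ℂ (Fin n))}
    {x y : EuclideanSpace ℂ (Fin n)} :
    (x, y) ∈ coordTransform θ Λ ↔
      ∃ p ∈ Λ, coordMix θ p = x ∧ coordMix θ (p.2, -p.1) = y := by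
  simp only [coordTransform, Set.mem_ofPred_eq, PiLp.ext_iff, coordMix_apply, eq_comm (b := x _),
    eq_comm (b := y _)]
  simp [apply_ite]

/-- Arnold's lemma. For every self-adjoint linear relation `Λ` on `ℂⁿ`
there is a subset `θ ⊆ {1,…,n}` such that the transformed relation `Λ^θ` is the graph of a
linear operator: its projection onto the first component is injective and surjective. -/
theorem exists_coordinate_subspace_graph (n : ℕ)
    (Λ : Submodule ℂ (EuclideanSpace ℂ (Fin n) × EuclideanSpace ℂ (Fin n)))
    (hΛ : IsSelfAdjointRel Λ) :
    ∃ θ : Finset (Fin n),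
      (∀ r s : EuclideanSpace ℂ (Fin n) × EuclideanSpace ℂ (Fin n),
          r ∈ coordTransform θ Λ → s ∈ coordTransform θ Λ → r.1 = s.1 → r.2 = s.2) ∧
      (∀ x : EuclideanSpace ℂ (Fin n), ∃ y : EuclideanSpace ℂ (Fin n),
          (x, y) ∈ coordTransform θ Λ) := by
  obtain ⟨θ, hsep, hsurj⟩ := (Λ.comap (LinearMap.inr ℂ _ _)).exists_finset_coord_bijective
  have hdisj := disjoint_ker_coordMix hΛ.ge hsep hsurj
  have htop := map_coordMix_eq_top hΛ.le hdisj
  refine ⟨θ, fun ⟨r₁, r₂⟩ ⟨s₁, s₂⟩ hr hs h₁ => ?_, fun x => ?_⟩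
  · obtain ⟨p, hp, rfl, rfl⟩ := mem_coordTransform_iff.1 hr
    obtain ⟨q, hq, rfl, rfl⟩ := mem_coordTransform_iff.1 hs
    obtain rfl : p = q := LinearMap.disjoint_ker_iff_injOn.1 hdisj hp hq h₁
    rfl
  · obtain ⟨p, hp, rfl⟩ : x ∈ Λ.map (coordMix θ) := htop ▸ Submodule.mem_top
    exact ⟨_, mem_coordTransform_iff.2 ⟨p, hp, rfl, rfl⟩⟩
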